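/- arXiv:1912.04168 — 6 statements merged into one kernel-verified Lean document; each statement's English description precedes it below -/
import Mathlib

section
/- Let G be a sublattice of E and E an ideal of a vector lattice F. If a net {x_α} in G is E-order convergent to 0 (as a net in G), then {x_α} is F-order convergent to 0. -/
/-- A net `x` in a vector lattice `F` is `F`-order convergent to `a`: there is a
nonempty downward-directed family `D` in `F` with infimum `0` (the range of a net
`y_β ↓ 0` in `F`) such that for each `d ∈ D`, eventually `|x α - a| ≤ d`. -/
def FOrderConv {F : Type*} [Lattice F] [AddCommGroup F] {ι : Type*} [Preorder ι]
    (x : ι → F) (a : F) : Prop :=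
  ∃ D : Set F, D.Nonempty ∧ DirectedOn (· ≥ ·) D ∧ IsGLB D 0 ∧
    ∀ d ∈ D, ∃ α₀ : ι, ∀ α, α₀ ≤ α → |x α - a| ≤ d

/-- Order convergence relative to a sublattice `E` of `F`: the dominating family lies
in `E` and decreases to `0` *in `E`* (`0` is its greatest lower bound among elements
of `E`). -/
def OrderConvIn {F : Type*} [Lattice F] [AddCommGroup F] (E : Set F) {ι : Type*} [Preorder ι]
    (x : ι → F) (a : F) : Prop :=
  ∃ D : Set F, D ⊆ E ∧ D.Nonempty ∧ DirectedOn (· ≥ ·) D ∧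
    (0 ∈ lowerBounds D ∧ ∀ b ∈ E, b ∈ lowerBounds D → b ≤ 0) ∧
    ∀ d ∈ D, ∃ α₀ : ι, ∀ α, α₀ ≤ α → |x α - a| ≤ d

/-
A lower bound `b` of `D` taken in `F` need not lie in `E`, but its positive part does: `D ⊆ E` has
`0` as a lower bound, so `0 ≤ b⁺ ≤ d` for any `d ∈ D`, and `E` is solid. Being a lower bound of `D`
in `E`, `b⁺ ≤ 0`, hence `b ≤ 0`. So the dominating family witnessing `E`-order convergence already
decreases to `0` in `F`.
-/

section Solid

variable {F : Type*} [Lattice F] [AddCommGroup F] [AddLeftMono F] {E : Set F}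

theorem mem_of_nonneg_of_le_of_solid (hE : ∀ u v : F, |u| ≤ |v| → v ∈ E → u ∈ E)
    {u v : F} (hu : 0 ≤ u) (huv : u ≤ v) (hv : v ∈ E) : u ∈ E :=
  hE u v (by rwa [abs_of_nonneg hu, abs_of_nonneg (hu.trans huv)]) hv

theorem isGLB_zero_of_solid (hE : ∀ u v : F, |u| ≤ |v| → v ∈ E → u ∈ E)
    {D : Set F} (hDE : D ⊆ E) (hD : D.Nonempty) (hlb : 0 ∈ lowerBounds D)
    (hglb : ∀ b ∈ E, b ∈ lowerBounds D → b ≤ 0) : IsGLB D 0 := by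
  refine ⟨hlb, fun b hb => ?_⟩
  have hb_pos : b⁺ ∈ lowerBounds D := fun d hd => sup_le (hb hd) (hlb hd)
  obtain ⟨d, hd⟩ := hD
  have hb_posE : b⁺ ∈ E := mem_of_nonneg_of_le_of_solid hE (posPart_nonneg b) (hb_pos hd) (hDE hd)
  exact posPart_nonpos.mp (hglb _ hb_posE hb_pos)

end Solid

theorem fOrderConv_of_idealOrderConv_general {F : Type*} [Lattice F] [AddCommGroup F]
    [CovariantClass F F (· + ·) (· ≤ ·)]
    (E : Set F)
    (hEsolid : ∀ u v : F, |u| ≤ |v| → v ∈ E → u ∈ E)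
    {ι : Type*} [Preorder ι]
    (x : ι → F)
    (h : OrderConvIn E x 0) : FOrderConv x 0 := by
  obtain ⟨D, hDE, hD, hDdir, ⟨hlb, hglb⟩, hconv⟩ := h
  exact ⟨D, hD, hDdir, isGLB_zero_of_solid hEsolid hDE hD hlb hglb, hconv⟩

/-- Let `G` be a sublattice of an ideal `E` of `F`. A net in `G` that is `E`-order
convergent to `0` is `F`-order convergent to `0`. -/
theorem fOrderConv_of_idealOrderConv {F : Type*} [Lattice F] [AddCommGroup F]
    [CovariantClass F F (· + ·) (· ≤ ·)] [Module ℝ F]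
    (E : Set F)
    (hEsup : ∀ a ∈ E, ∀ b ∈ E, a ⊔ b ∈ E) (hEinf : ∀ a ∈ E, ∀ b ∈ E, a ⊓ b ∈ E)
    (hEadd : ∀ a ∈ E, ∀ b ∈ E, a + b ∈ E) (hEsmul : ∀ (c : ℝ), ∀ a ∈ E, c • a ∈ E)
    (hEsolid : ∀ u v : F, |u| ≤ |v| → v ∈ E → u ∈ E)
    (G : Set F) (hGE : G ⊆ E)
    (hGsup : ∀ a ∈ G, ∀ b ∈ G, a ⊔ b ∈ G) (hGinf : ∀ a ∈ G, ∀ b ∈ G, a ⊓ b ∈ G)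
    (hGadd : ∀ a ∈ G, ∀ b ∈ G, a + b ∈ G) (hGsmul : ∀ (c : ℝ), ∀ a ∈ G, c • a ∈ G)
    {ι : Type*} [Nonempty ι] [Preorder ι] [IsDirected ι (· ≤ ·)]
    (x : ι → F) (hx : ∀ α, x α ∈ G)
    (h : OrderConvIn E x 0) : FOrderConv x 0 :=
  fOrderConv_of_idealOrderConv_general E hEsolid x h
end

section
/- Let G be a sublattice of E and E an ideal of a vector lattice F. If a net {x_α} in G is order bounded in E (i.e., |x_α| ≤ u for some u ∈ E⁺ and all α) and is F-order convergent to 0, then {x_α} is E-order convergent to 0. -/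
/-!
Truncating the dominating family: if `D ↓ 0` in `F` and `|x α| ≤ u` with `u ∈ E⁺`, then
`{d ⊓ u | d ∈ D}` still decreases to `0` in `F`, still dominates `|x α|` eventually, and lies in
the order interval `[0, u]`, hence in the ideal `E`. An infimum in `F` that lies in `E` is a
fortiori the infimum in `E`.
-/

theorem IsGLB.image_inf_right {α : Type*} [SemilatticeInf α] {D : Set α} {a u : α}
    (hD : IsGLB D a) (hu : a ≤ u) :
    IsGLB ((· ⊓ u) '' D) a := by
  refine ⟨?_, fun b hb => hD.2 fun d hd => ?_⟩
  · rintro _ ⟨d, hd, rfl⟩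
    exact le_inf (hD.1 hd) hu
  · exact (hb ⟨d, hd, rfl⟩).trans inf_le_left

section

variable {F : Type*} [Lattice F] [AddCommGroup F]

theorem orderConvIn_of_isGLB {E : Set F} {ι : Type*} [Preorder ι] {x : ι → F} {a : F}
    {D : Set F} (hDE : D ⊆ E) (hD : D.Nonempty) (hdir : DirectedOn (· ≥ ·) D)
    (hglb : IsGLB D 0) (hev : ∀ d ∈ D, ∃ α₀ : ι, ∀ α, α₀ ≤ α → |x α - a| ≤ d) :
    OrderConvIn E x a :=
  ⟨D, hDE, hD, hdir, ⟨hglb.1, fun _ _ hb => hglb.2 hb⟩, hev⟩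

theorem FOrderConv.orderConvIn_of_abs_sub_le [AddLeftMono F] {E : Set F}
    (hEsolid : ∀ u v : F, |u| ≤ |v| → v ∈ E → u ∈ E) {ι : Type*} [Preorder ι]
    {x : ι → F} {a u : F} (hu : u ∈ E) (hu0 : 0 ≤ u) (hbdd : ∀ α, |x α - a| ≤ u)
    (h : FOrderConv x a) : OrderConvIn E x a := by
  obtain ⟨D, hD, hdir, hglb, hev⟩ := h
  have hglb' := hglb.image_inf_right hu0
  refine orderConvIn_of_isGLB ?_ (hD.image _)
    (hdir.mono_comp fun _ _ hle => inf_le_inf_right u hle) hglb' ?_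
  · rintro _ ⟨d, hd, rfl⟩
    refine hEsolid _ u ?_ hu
    rw [abs_of_nonneg (hglb'.1 ⟨d, hd, rfl⟩), abs_of_nonneg hu0]
    exact inf_le_right
  · rintro _ ⟨d, hd, rfl⟩
    obtain ⟨α₀, hα₀⟩ := hev d hd
    exact ⟨α₀, fun α hα => le_inf (hα₀ α hα) (hbdd α)⟩

end

theorem idealOrderConv_of_fOrderConv_of_bounded_general {F : Type*} [Lattice F] [AddCommGroup F]
    [CovariantClass F F (· + ·) (· ≤ ·)]
    (E : Set F)
    (hEsolid : ∀ u v : F, |u| ≤ |v| → v ∈ E → u ∈ E)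
    {ι : Type*} [Preorder ι]
    (x : ι → F)
    (u : F) (hu : u ∈ E) (hu0 : 0 ≤ u) (hbdd : ∀ α, |x α| ≤ u)
    (h : FOrderConv x 0) : OrderConvIn E x 0 :=
  h.orderConvIn_of_abs_sub_le hEsolid hu hu0 fun α => by simpa only [sub_zero] using hbdd α

/-- Let `G` be a sublattice of an ideal `E` of `F`. A net in `G` that is order bounded
in `E` and `F`-order convergent to `0` is `E`-order convergent to `0`. -/
theorem idealOrderConv_of_fOrderConv_of_bounded {F : Type*} [Lattice F] [AddCommGroup F]
    [CovariantClass F F (· + ·) (· ≤ ·)] [Module ℝ F]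
    (E : Set F)
    (hEsup : ∀ a ∈ E, ∀ b ∈ E, a ⊔ b ∈ E) (hEinf : ∀ a ∈ E, ∀ b ∈ E, a ⊓ b ∈ E)
    (hEadd : ∀ a ∈ E, ∀ b ∈ E, a + b ∈ E) (hEsmul : ∀ (c : ℝ), ∀ a ∈ E, c • a ∈ E)
    (hEsolid : ∀ u v : F, |u| ≤ |v| → v ∈ E → u ∈ E)
    (G : Set F) (hGE : G ⊆ E)
    (hGsup : ∀ a ∈ G, ∀ b ∈ G, a ⊔ b ∈ G) (hGinf : ∀ a ∈ G, ∀ b ∈ G, a ⊓ b ∈ G)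
    (hGadd : ∀ a ∈ G, ∀ b ∈ G, a + b ∈ G) (hGsmul : ∀ (c : ℝ), ∀ a ∈ G, c • a ∈ G)
    {ι : Type*} [Nonempty ι] [Preorder ι] [IsDirected ι (· ≤ ·)]
    (x : ι → F) (hx : ∀ α, x α ∈ G)
    (u : F) (hu : u ∈ E) (hu0 : 0 ≤ u) (hbdd : ∀ α, |x α| ≤ u)
    (h : FOrderConv x 0) : OrderConvIn E x 0 :=
  idealOrderConv_of_fOrderConv_of_bounded_general E hEsolid x u hu hu0 hbdd h
end

section
/- Let E be an F-Dedekind complete sublattice of a vector lattice F. If a sequence {x_n} in E is F-order convergent to 0, then {x_n} is order bounded in E. -/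
/-!
Any single member `d` of the dominating family bounds `|x n|` from some index on, so
`{|x n|}` is bounded above in `F` by `d` together with finitely many terms. These moduli
lie in `E` (a sublattice closed under negation), and `F`-Dedekind completeness puts
their supremum in `E`.
-/

open Filter

theorem FOrderConv.isBoundedUnder_abs_sub {F : Type*} [Lattice F] [AddCommGroup F]
    {ι : Type*} [Preorder ι] {x : ι → F} {a : F} (h : FOrderConv x a) :
    IsBoundedUnder (· ≤ ·) atTop fun α => |x α - a| := by
  obtain ⟨D, ⟨d, hd⟩, -, -, hdom⟩ := h
  obtain ⟨α₀, hα₀⟩ := hdom d hd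
  exact isBoundedUnder_of_eventually_le ((eventually_ge_atTop α₀).mono hα₀)

theorem FOrderConv.bddAbove_range_abs {F : Type*} [Lattice F] [AddCommGroup F]
    {x : ℕ → F} (h : FOrderConv x 0) : BddAbove (Set.range fun n => |x n|) := by
  simpa only [sub_zero] using h.isBoundedUnder_abs_sub.bddAbove_range

theorem orderBounded_of_fOrderConv_general {F : Type*} [Lattice F] [AddCommGroup F]
    [Module ℝ F]
    (E : Set F)
    (hEsup : ∀ a ∈ E, ∀ b ∈ E, a ⊔ b ∈ E)
    (hEsmul : ∀ (c : ℝ), ∀ a ∈ E, c • a ∈ E)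
    (hFDC : ∀ A : Set F, A ⊆ E → A.Nonempty → BddAbove A → ∃ s ∈ E, IsLUB A s)
    (x : ℕ → F) (hx : ∀ n, x n ∈ E)
    (h : FOrderConv x 0) :
    ∃ b ∈ E, ∀ n, |x n| ≤ b := by
  have habs_mem : Set.range (fun n => |x n|) ⊆ E := by
    rintro _ ⟨n, rfl⟩
    have hneg : -x n ∈ E := by simpa using hEsmul (-1) (x n) (hx n)
    exact hEsup _ (hx n) _ hneg
  obtain ⟨s, hsE, hs⟩ := hFDC _ habs_mem (Set.range_nonempty _) h.bddAbove_range_abs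
  exact ⟨s, hsE, fun n => hs.1 ⟨n, rfl⟩⟩

/-- If `E` is an `F`-Dedekind complete sublattice of `F` and a sequence in `E` is
`F`-order convergent to `0`, then the sequence is order bounded in `E`. -/
theorem orderBounded_of_fOrderConv {F : Type*} [Lattice F] [AddCommGroup F]
    [CovariantClass F F (· + ·) (· ≤ ·)] [Module ℝ F]
    (E : Set F)
    (hEsup : ∀ a ∈ E, ∀ b ∈ E, a ⊔ b ∈ E) (hEinf : ∀ a ∈ E, ∀ b ∈ E, a ⊓ b ∈ E)
    (hEadd : ∀ a ∈ E, ∀ b ∈ E, a + b ∈ E) (hEsmul : ∀ (c : ℝ), ∀ a ∈ E, c • a ∈ E)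
    (hFDC : ∀ A : Set F, A ⊆ E → A.Nonempty → BddAbove A → ∃ s ∈ E, IsLUB A s)
    (x : ℕ → F) (hx : ∀ n, x n ∈ E)
    (h : FOrderConv x 0) :
    ∃ b ∈ E, ∀ n, |x n| ≤ b :=
  orderBounded_of_fOrderConv_general E hEsup hEsmul hFDC x hx h
end

section
/- Let E be a Dedekind σ-complete vector lattice which is a sublattice of a vector lattice F, and let {x_n} be a pairwise disjoint sequence in E such that sup_n |x_n| exists in F. Then x_n →(Fo) 0. -/
/-! Put `P m = |x 0| ⊔ ⋯ ⊔ |x m|` and `s = sup_n |x n|`. Disjointness makes `|x n|` disjoint from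
`P m` for `n > m`, so `|x n| + P m = |x n| ⊔ P m ≤ s`, i.e. `|x n| ≤ s - P m`; and `s - P m ↓ 0`
because `P m ↑ s`. -/

open Set

section LatticeOrderedGroup

variable {α : Type*} [Lattice α] [AddCommGroup α] [AddLeftMono α]

theorem add_le_sup_of_inf_nonpos {a b : α} (h : a ⊓ b ≤ 0) : a + b ≤ a ⊔ b := by
  rw [← inf_add_sup a b]
  exact add_le_of_nonpos_left h

theorem isGLB_range_sub_of_isLUB {ι : Type*} {u : ι → α} {s : α} (hs : IsLUB (range u) s) :
    IsGLB (range fun i => s - u i) 0 := by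
  refine ⟨?_, fun b hb => ?_⟩
  · rintro _ ⟨i, rfl⟩
    exact sub_nonneg.2 (hs.1 ⟨i, rfl⟩)
  · have hsb : s ≤ s - b := hs.2 <| by
      rintro _ ⟨i, rfl⟩
      exact le_sub_comm.1 (hb ⟨i, rfl⟩)
    simpa using hsb

theorem fOrderConv_zero_of_abs_le_sub {x u : ℕ → α} {s : α} (hu : Monotone u)
    (hs : IsLUB (range u) s) (hx : ∀ m n, m < n → |x n| ≤ s - u m) : FOrderConv x 0 := by
  refine ⟨range fun m => s - u m, range_nonempty _,
    directedOn_range.2 fun m k => ?_, isGLB_range_sub_of_isLUB hs, ?_⟩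
  · exact ⟨max m k, sub_le_sub_left (hu (le_max_left m k)) s,
      sub_le_sub_left (hu (le_max_right m k)) s⟩
  · rintro _ ⟨m, rfl⟩
    exact ⟨m + 1, fun n hn => by simpa using hx m n hn⟩

theorem abs_add_partialSups_abs_le {x : ℕ → α} (hdisj : ∀ m n, m ≠ n → |x m| ⊓ |x n| = 0)
    {s : α} (hs : ∀ n, |x n| ≤ s) {m n : ℕ} (hmn : m < n) :
    |x n| + partialSups (fun k => |x k|) m ≤ s := by
  let : DistribLattice α := AddCommGroup.toDistribLattice α
  have hinf : |x n| ⊓ partialSups (fun k => |x k|) m ≤ 0 :=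
    (partialSups_iff_forall (fun y => |x n| ⊓ y ≤ 0) (by simp [inf_sup_left])).2
      fun k hk => (hdisj n k (by omega)).le
  exact (add_le_sup_of_inf_nonpos hinf).trans
    (sup_le (hs n) (partialSups_le _ _ _ fun k _ => hs k))

end LatticeOrderedGroup

theorem isLUB_range_partialSups_iff {ι α : Type*} [Preorder ι] [LocallyFiniteOrderBot ι]
    [SemilatticeSup α] {f : ι → α} {s : α} :
    IsLUB (range (partialSups f)) s ↔ IsLUB (range f) s := by
  simp only [IsLUB, upperBounds_range_partialSups]

theorem fOrderConv_of_disjoint_general {F : Type*} [Lattice F] [AddCommGroup F]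
    [CovariantClass F F (· + ·) (· ≤ ·)]
    (x : ℕ → F)
    (hdisj : ∀ m n, m ≠ n → |x m| ⊓ |x n| = 0)
    (hsup : ∃ s : F, IsLUB (Set.range fun n => |x n|) s) :
    FOrderConv x 0 := by
  obtain ⟨s, hs⟩ := hsup
  refine fOrderConv_zero_of_abs_le_sub (partialSups_monotone _)
    (isLUB_range_partialSups_iff.2 hs) fun m n hmn => ?_
  exact le_sub_iff_add_le.2 (abs_add_partialSups_abs_le hdisj (fun k => hs.1 ⟨k, rfl⟩) hmn)

/-- If `E` is a Dedekind σ-complete sublattice of `F` and `{x_n}` is a pairwise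
disjoint sequence in `E` such that `sup_n |x_n|` exists in `F`, then `x_n →(Fo) 0`. -/
theorem fOrderConv_of_disjoint {F : Type*} [Lattice F] [AddCommGroup F]
    [CovariantClass F F (· + ·) (· ≤ ·)] [Module ℝ F]
    (E : Set F)
    (hEsup : ∀ a ∈ E, ∀ b ∈ E, a ⊔ b ∈ E) (hEinf : ∀ a ∈ E, ∀ b ∈ E, a ⊓ b ∈ E)
    (hEadd : ∀ a ∈ E, ∀ b ∈ E, a + b ∈ E) (hEsmul : ∀ (c : ℝ), ∀ a ∈ E, c • a ∈ E)
    (hEσ : ∀ f : ℕ → F, (∀ n, f n ∈ E) → (∃ b ∈ E, ∀ n, f n ≤ b) →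
      ∃ s ∈ E, s ∈ upperBounds (Set.range f) ∧
        ∀ b ∈ E, b ∈ upperBounds (Set.range f) → s ≤ b)
    (x : ℕ → F) (hx : ∀ n, x n ∈ E)
    (hdisj : ∀ m n, m ≠ n → |x m| ⊓ |x n| = 0)
    (hsup : ∃ s : F, IsLUB (Set.range fun n => |x n|) s) :
    FOrderConv x 0 :=
  fOrderConv_of_disjoint_general x hdisj hsup
end

section
/- Let E be a sublattice of a Dedekind complete vector lattice F, and let {x_n} be a sequence in E with x_n →(Fo) 0. Then the sequence of Cesàro means a_n = (1/n) Σ_{k=1}^n x_k is F-order convergent to 0. -/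
section Aux
variable {F : Type*} [Lattice F] [AddCommGroup F]
    [CovariantClass F F (· + ·) (· ≤ ·)]

-- Riesz-type inequality
lemma aux_inf_add_le {a b c : F} (ha : 0 ≤ a) (hb : 0 ≤ b) (hc : 0 ≤ c) :
    a ⊓ (b + c) ≤ a ⊓ b + a ⊓ c := by
  have h1 : a ⊓ b + a ⊓ c = ((a + (a ⊓ c)) ⊓ (b + (a ⊓ c))) := by
    rw [inf_add]
  rw [h1, add_inf, add_inf]
  refine le_inf (le_inf ?_ ?_) (le_inf ?_ ?_)
  · exact le_trans inf_le_left (le_add_of_nonneg_right ha)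
  · exact le_trans inf_le_left (by exact le_add_of_nonneg_right hc)
  · exact le_trans inf_le_left (le_add_of_nonneg_left hb)
  · exact inf_le_right

lemma aux_disj_nsmul {u v : F} (hu : 0 ≤ u) (hv : 0 ≤ v) (h : u ⊓ v = 0) (n : ℕ) :
    u ⊓ (n • v) = 0 := by
  induction n with
  | zero => simp [hu]
  | succ k ih =>
    have : u ⊓ ((k+1) • v) ≤ u ⊓ (k • v) + u ⊓ v := by
      rw [succ_nsmul]
      exact aux_inf_add_le hu (nsmul_nonneg hv k) hv
    rw [ih, h, add_zero] at this
    exact le_antisymm this (le_inf hu (nsmul_nonneg hv _))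

end Aux

section Aux2
variable {F : Type*} [Lattice F] [AddCommGroup F]
    [CovariantClass F F (· + ·) (· ≤ ·)] [Module ℝ F]

lemma aux_nsmul_eq_zero {n : ℕ} (hn : n ≠ 0) {a : F} (h : n • a = 0) : a = 0 := by
  have h2 : ((n : ℝ)) • a = 0 := by rw [Nat.cast_smul_eq_nsmul]; exact h
  have h3 : ((n : ℝ))⁻¹ • ((n : ℝ) • a) = a := by
    rw [smul_smul, inv_mul_cancel₀ (by exact_mod_cast hn), one_smul]
  rw [h2, smul_zero] at h3
  exact h3.symm

/-- In an `ℓ`-group that is an ℝ-module, `0 ≤ n • a` (`n ≠ 0`) implies `0 ≤ a`. -/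
lemma aux_nonneg_of_nsmul {n : ℕ} (hn : n ≠ 0) {a : F} (h : 0 ≤ n • a) : 0 ≤ a := by
  have hd : a⁺ ⊓ a⁻ = 0 := posPart_inf_negPart_eq_zero a
  have hd1 : a⁺ ⊓ (n • a⁻) = 0 := aux_disj_nsmul (posPart_nonneg a) (negPart_nonneg a) hd n
  have hd2 : (n • a⁻) ⊓ (n • a⁺) = 0 :=
    aux_disj_nsmul (nsmul_nonneg (negPart_nonneg a) n) (posPart_nonneg a)
      (by rw [inf_comm]; exact hd1) n
  have key : n • a⁻ ≤ n • a⁺ := by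
    have heq : n • a = n • a⁺ - n • a⁻ := by rw [← smul_sub, posPart_sub_negPart]
    rw [heq, sub_nonneg] at h
    exact h
  have : n • a⁻ = 0 := by
    have := inf_eq_left.mpr key
    rw [hd2] at this
    exact this.symm
  have : a⁻ = 0 := aux_nsmul_eq_zero hn this
  rw [← negPart_eq_zero]
  exact this

end Aux2

section Aux3
variable {F : Type*} [Lattice F] [AddCommGroup F]
    [CovariantClass F F (· + ·) (· ≤ ·)] [Module ℝ F]

lemma aux_ratsmul_nonneg (p : ℕ) {r : ℕ} (hr : r ≠ 0) {y : F} (hy : 0 ≤ y) :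
    0 ≤ ((p : ℝ) / (r : ℝ)) • y := by
  have hw : (r : ℕ) • (((r : ℝ))⁻¹ • y) = y := by
    rw [← Nat.cast_smul_eq_nsmul ℝ, smul_smul, mul_inv_cancel₀ (by exact_mod_cast hr), one_smul]
  have hwpos : 0 ≤ ((r : ℝ))⁻¹ • y := aux_nonneg_of_nsmul hr (by rw [hw]; exact hy)
  have : ((p : ℝ) / (r : ℝ)) • y = (p : ℕ) • (((r : ℝ))⁻¹ • y) := by
    rw [← Nat.cast_smul_eq_nsmul ℝ, smul_smul, div_eq_mul_inv]
  rw [this]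
  exact nsmul_nonneg hwpos p

lemma aux_ratsmul_le {p r p' r' : ℕ} (hr : r ≠ 0) (hr' : r' ≠ 0)
    (hpq : p * r' ≤ p' * r) {y : F} (hy : 0 ≤ y) :
    ((p : ℝ) / (r : ℝ)) • y ≤ ((p' : ℝ) / (r' : ℝ)) • y := by
  have key : 0 ≤ (((p' * r - p * r' : ℕ) : ℝ) / ((r' * r : ℕ) : ℝ)) • y :=
    aux_ratsmul_nonneg _ (Nat.mul_ne_zero hr' hr) hy
  have hcast : (((p' * r - p * r' : ℕ) : ℝ) / ((r' * r : ℕ) : ℝ))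
      = (p' : ℝ) / (r' : ℝ) - (p : ℝ) / (r : ℝ) := by
    have : ((p' * r - p * r' : ℕ) : ℝ) = (p' : ℝ) * r - (p : ℝ) * r' := by
      rw [Nat.cast_sub hpq]; push_cast; ring
    rw [this]
    field_simp
    push_cast
    ring
  rw [hcast, sub_smul, sub_nonneg] at key
  exact key

lemma aux_archimedean (hDC : ∀ A : Set F, A.Nonempty → BddAbove A → ∃ s, IsLUB A s)
    {S b : F} (h : ∀ n : ℕ, (n + 1) • b ≤ S) : b ≤ 0 := by
  obtain ⟨s, hs⟩ := hDC (Set.range fun n : ℕ => (n + 1) • b) ⟨1 • b, ⟨0, by norm_num⟩⟩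
    ⟨S, by rintro _ ⟨n, rfl⟩; exact h n⟩
  have hub : s ≤ s - b := by
    apply hs.2
    rintro _ ⟨n, rfl⟩
    have : (n + 2) • b ≤ s := hs.1 ⟨n + 1, by ring_nf⟩
    have h2 : (n + 1) • b + b ≤ s := by
      rw [← succ_nsmul]
      exact this
    exact le_sub_iff_add_le.mpr h2
  have : s + b ≤ s := le_sub_iff_add_le.mp hub
  exact (add_le_iff_nonpos_right s).mp this

end Aux3


/-- If `F` is Dedekind complete and a sequence `{x_n}` in a sublattice `E` is
`F`-order convergent to `0`, then its Cesàro means are `F`-order convergent to `0`. -/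
theorem fOrderConv_cesaro {F : Type*} [Lattice F] [AddCommGroup F]
    [CovariantClass F F (· + ·) (· ≤ ·)] [Module ℝ F]
    (E : Set F)
    (hEsup : ∀ a ∈ E, ∀ b ∈ E, a ⊔ b ∈ E) (hEinf : ∀ a ∈ E, ∀ b ∈ E, a ⊓ b ∈ E)
    (hEadd : ∀ a ∈ E, ∀ b ∈ E, a + b ∈ E) (hEsmul : ∀ (c : ℝ), ∀ a ∈ E, c • a ∈ E)
    (hDC : ∀ A : Set F, A.Nonempty → BddAbove A → ∃ s, IsLUB A s)
    (x : ℕ → F) (hx : ∀ n, x n ∈ E)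
    (h : FOrderConv x 0) :
    FOrderConv (fun n : ℕ => ((n : ℝ) + 1)⁻¹ • ∑ k ∈ Finset.range (n + 1), x k) 0 := by
  classical
  letI : IsOrderedAddMonoid F :=
    { add_le_add_left := fun _ _ h _ => add_le_add h le_rfl }
  obtain ⟨D, hDne, hDdir, hDglb, hDev⟩ := h
  have hDpos : ∀ d ∈ D, 0 ≤ d := fun d hd => hDglb.1 hd
  obtain ⟨d₀, hd₀⟩ := hDne
  obtain ⟨N₀, hN₀⟩ := hDev d₀ hd₀
  set B : F := d₀ + ∑ k ∈ Finset.range N₀, |x k| with hB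
  have hBub : ∀ k : ℕ, |x k| ≤ B := by
    intro k
    by_cases hk : N₀ ≤ k
    · have h1 := hN₀ k hk; rw [sub_zero] at h1
      exact h1.trans (le_add_of_nonneg_right (Finset.sum_nonneg fun i _ => abs_nonneg _))
    · push_neg at hk
      calc |x k| ≤ ∑ i ∈ Finset.range N₀, |x i| :=
            Finset.single_le_sum (fun i _ => abs_nonneg (x i)) (Finset.mem_range.mpr hk)
        _ ≤ B := le_add_of_nonneg_left (hDpos d₀ hd₀)
  have hzex : ∀ N : ℕ, ∃ s, IsLUB ((fun k => |x k|) '' {k | N ≤ k}) s := fun N =>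
    hDC _ ⟨|x N|, ⟨N, le_refl N, rfl⟩⟩ ⟨B, by rintro _ ⟨k, hk, rfl⟩; exact hBub k⟩
  choose z hzlub using hzex
  have hzabs : ∀ N k, N ≤ k → |x k| ≤ z N := fun N k hk => (hzlub N).1 ⟨k, hk, rfl⟩
  have hz0 : ∀ N, 0 ≤ z N := fun N => le_trans (abs_nonneg (x N)) (hzabs N N le_rfl)
  have hzanti : ∀ {M N : ℕ}, M ≤ N → z N ≤ z M := by
    intro M N hMN
    exact (hzlub N).2 fun y hy => by
      obtain ⟨k, hk, rfl⟩ := hy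
      exact (hzlub M).1 ⟨k, hMN.trans hk, rfl⟩
  have hzled : ∀ d ∈ D, ∃ N, z N ≤ d := by
    intro d hd
    obtain ⟨N₁, hN₁⟩ := hDev d hd
    refine ⟨N₁, (hzlub N₁).2 ?_⟩
    rintro _ ⟨k, hk, rfl⟩
    have := hN₁ k hk; rwa [sub_zero] at this
  refine ⟨{w | ∃ N m : ℕ, w = z N + (((N + 1 : ℕ) : ℝ) / ((m + 1 : ℕ) : ℝ)) • z 0},
    ⟨_, 0, 0, rfl⟩, ?_, ?_, ?_⟩
  · -- directed
    rintro _ ⟨N, m, rfl⟩ _ ⟨N', m', rfl⟩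
    set Ns := max N N' with hNs
    set ms := (Ns + 1) * (m + 1) * (m' + 1) - 1 with hms
    have hms1 : ms + 1 = (Ns + 1) * (m + 1) * (m' + 1) := by
      rw [hms, Nat.sub_add_cancel (Nat.succ_le_of_lt (by positivity))]
    refine ⟨z Ns + (((Ns + 1 : ℕ) : ℝ) / ((ms + 1 : ℕ) : ℝ)) • z 0, ⟨Ns, ms, rfl⟩, ?_, ?_⟩
    · refine add_le_add (hzanti (le_max_left _ _))
        (aux_ratsmul_le (p := Ns + 1) (r := ms + 1) (p' := N + 1) (r' := m + 1)
          (by omega) (by omega) ?_ (hz0 0))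
      rw [hms1]
      calc (Ns + 1) * (m + 1) ≤ ((Ns + 1) * (m + 1)) * ((N + 1) * (m' + 1)) :=
            Nat.le_mul_of_pos_right _ (by positivity)
        _ = (N + 1) * ((Ns + 1) * (m + 1) * (m' + 1)) := by ring
    · refine add_le_add (hzanti (le_max_right _ _))
        (aux_ratsmul_le (p := Ns + 1) (r := ms + 1) (p' := N' + 1) (r' := m' + 1)
          (by omega) (by omega) ?_ (hz0 0))
      rw [hms1]
      calc (Ns + 1) * (m' + 1) ≤ ((Ns + 1) * (m' + 1)) * ((N' + 1) * (m + 1)) :=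
            Nat.le_mul_of_pos_right _ (by positivity)
        _ = (N' + 1) * ((Ns + 1) * (m + 1) * (m' + 1)) := by ring
  · -- IsGLB
    constructor
    · rintro _ ⟨N, m, rfl⟩
      exact add_nonneg (hz0 N) (aux_ratsmul_nonneg (N + 1) (by omega) (hz0 0))
    · intro b hb
      have hbz : ∀ N, b ≤ z N := by
        intro N
        have key : ∀ m : ℕ, (m + 1) • (b - z N) ≤ (N + 1) • z 0 := by
          intro m
          have h1 : b ≤ z N + (((N + 1 : ℕ) : ℝ) / ((m + 1 : ℕ) : ℝ)) • z 0 := hb ⟨N, m, rfl⟩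
          have h2 : b - z N ≤ (((N + 1 : ℕ) : ℝ) / ((m + 1 : ℕ) : ℝ)) • z 0 :=
            sub_le_iff_le_add'.mpr h1
          have h3 := nsmul_le_nsmul_right h2 (m + 1)
          have h4 : (m + 1) • ((((N + 1 : ℕ) : ℝ) / ((m + 1 : ℕ) : ℝ)) • z 0)
              = (N + 1) • z 0 := by
            rw [← Nat.cast_smul_eq_nsmul ℝ (m + 1), ← Nat.cast_smul_eq_nsmul ℝ (N + 1),
              smul_smul]
            congr 1
            have hne : ((m + 1 : ℕ) : ℝ) ≠ 0 := by positivity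
            field_simp
          rw [h4] at h3
          exact h3
        exact sub_nonpos.mp (aux_archimedean hDC key)
      apply hDglb.2
      intro d hd
      obtain ⟨N, hN⟩ := hzled d hd
      exact (hbz N).trans hN
  · -- eventual bound
    rintro _ ⟨N, m, rfl⟩
    refine ⟨max N m, fun n hn => ?_⟩
    have hNn : N ≤ n := le_trans (le_max_left _ _) hn
    have hmn : m ≤ n := le_trans (le_max_right _ _) hn
    rw [sub_zero]
    set sx := ∑ k ∈ Finset.range (n + 1), x k with hsx
    set sz := ∑ k ∈ Finset.range (n + 1), z k with hsz
    have hscal : ((n : ℝ) + 1)⁻¹ = ((1 : ℕ) : ℝ) / ((n + 1 : ℕ) : ℝ) := by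
      push_cast; rw [one_div]
    have habs : |((n : ℝ) + 1)⁻¹ • sx| ≤ (((1 : ℕ) : ℝ) / ((n + 1 : ℕ) : ℝ)) • sz := by
      rw [hscal]
      apply abs_le'.mpr
      constructor
      · have hpos : (0 : F) ≤ (((1 : ℕ) : ℝ) / ((n + 1 : ℕ) : ℝ)) • (sz - sx) := by
          apply aux_ratsmul_nonneg 1 (by omega)
          rw [hsz, hsx, ← Finset.sum_sub_distrib]
          refine Finset.sum_nonneg fun k _ => ?_
          have h2 : x k ≤ z k := (le_abs_self (x k)).trans (hzabs k k le_rfl)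
          exact sub_nonneg.mpr h2
        rw [smul_sub] at hpos
        exact sub_nonneg.mp hpos
      · have hpos : (0 : F) ≤ (((1 : ℕ) : ℝ) / ((n + 1 : ℕ) : ℝ)) • (sz + sx) := by
          apply aux_ratsmul_nonneg 1 (by omega)
          rw [hsz, hsx, ← Finset.sum_add_distrib]
          refine Finset.sum_nonneg fun k _ => ?_
          have h2 : -x k ≤ z k := (neg_le_abs (x k)).trans (hzabs k k le_rfl)
          have h3 := sub_nonneg.mpr h2
          rwa [sub_neg_eq_add] at h3
        rw [smul_add] at hpos
        have heq : (((1 : ℕ) : ℝ) / ((n + 1 : ℕ) : ℝ)) • sz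
            - -((((1 : ℕ) : ℝ) / ((n + 1 : ℕ) : ℝ)) • sx)
            = (((1 : ℕ) : ℝ) / ((n + 1 : ℕ) : ℝ)) • sz
              + (((1 : ℕ) : ℝ) / ((n + 1 : ℕ) : ℝ)) • sx := sub_neg_eq_add _ _
        exact sub_nonneg.mp (heq ▸ hpos)
    have hsplit : sz ≤ N • z 0 + (n + 1 - N) • z N := by
      rw [hsz, Finset.range_eq_Ico, ← Finset.sum_Ico_consecutive _ (Nat.zero_le N)
        (by omega : N ≤ n + 1)]
      refine add_le_add ?_ ?_
      · calc ∑ k ∈ Finset.Ico 0 N, z k ≤ (Finset.Ico 0 N).card • z 0 :=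
              Finset.sum_le_card_nsmul _ _ _ fun k _ => hzanti (Nat.zero_le k)
          _ = N • z 0 := by rw [Nat.card_Ico, Nat.sub_zero]
      · calc ∑ k ∈ Finset.Ico N (n + 1), z k ≤ (Finset.Ico N (n + 1)).card • z N :=
              Finset.sum_le_card_nsmul _ _ _ fun k hk =>
                hzanti (Finset.mem_Ico.mp hk).1
          _ = (n + 1 - N) • z N := by rw [Nat.card_Ico]
    have hmono : (((1 : ℕ) : ℝ) / ((n + 1 : ℕ) : ℝ)) • sz
        ≤ (((1 : ℕ) : ℝ) / ((n + 1 : ℕ) : ℝ)) • (N • z 0 + (n + 1 - N) • z N) := by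
      have := aux_ratsmul_nonneg 1 (show n + 1 ≠ 0 by omega)
        (sub_nonneg.mpr hsplit)
      rw [smul_sub] at this
      exact sub_nonneg.mp this
    have hsplit2 : (((1 : ℕ) : ℝ) / ((n + 1 : ℕ) : ℝ)) • (N • z 0 + (n + 1 - N) • z N)
        = (((N : ℕ) : ℝ) / ((n + 1 : ℕ) : ℝ)) • z 0
          + (((n + 1 - N : ℕ) : ℝ) / ((n + 1 : ℕ) : ℝ)) • z N := by
      rw [smul_add, ← Nat.cast_smul_eq_nsmul ℝ N, ← Nat.cast_smul_eq_nsmul ℝ (n + 1 - N),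
        smul_smul, smul_smul]
      congr 2 <;> ring
    have hterm1 : (((N : ℕ) : ℝ) / ((n + 1 : ℕ) : ℝ)) • z 0
        ≤ (((N + 1 : ℕ) : ℝ) / ((m + 1 : ℕ) : ℝ)) • z 0 := by
      refine aux_ratsmul_le (by omega) (by omega) ?_ (hz0 0)
      calc N * (m + 1) ≤ N * (n + 1) := Nat.mul_le_mul_left _ (by omega)
        _ ≤ (N + 1) * (n + 1) := Nat.mul_le_mul_right _ (by omega)
    have hterm2 : (((n + 1 - N : ℕ) : ℝ) / ((n + 1 : ℕ) : ℝ)) • z N ≤ z N := by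
      have h1 : (((1 : ℕ) : ℝ) / ((1 : ℕ) : ℝ)) • z N = z N := by norm_num
      calc (((n + 1 - N : ℕ) : ℝ) / ((n + 1 : ℕ) : ℝ)) • z N
          ≤ (((1 : ℕ) : ℝ) / ((1 : ℕ) : ℝ)) • z N :=
            aux_ratsmul_le (by omega) (by omega) (by omega) (hz0 N)
        _ = z N := h1
    calc |((n : ℝ) + 1)⁻¹ • sx| ≤ (((1 : ℕ) : ℝ) / ((n + 1 : ℕ) : ℝ)) • sz := habs
      _ ≤ (((1 : ℕ) : ℝ) / ((n + 1 : ℕ) : ℝ)) • (N • z 0 + (n + 1 - N) • z N) := hmono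
      _ = (((N : ℕ) : ℝ) / ((n + 1 : ℕ) : ℝ)) • z 0
          + (((n + 1 - N : ℕ) : ℝ) / ((n + 1 : ℕ) : ℝ)) • z N := hsplit2
      _ ≤ (((N + 1 : ℕ) : ℝ) / ((m + 1 : ℕ) : ℝ)) • z 0 + z N :=
          add_le_add hterm1 hterm2
      _ = z N + (((N + 1 : ℕ) : ℝ) / ((m + 1 : ℕ) : ℝ)) • z 0 := add_comm _ _
end

section
/- Let E, F, G, H be vector lattices with E a sublattice of F and G an ideal of H, where E is F-Dedekind complete and G is H-Dedekind complete. A positive linear operator T : E → G is FH-order continuous (i.e., x_α →(Fo) 0 in E implies Tx_α →(Ho) 0 in G) if and only if for every net {x_α} in E with x_α ↓ and inf x_α = 0 in F, one has Tx_α ↓ and inf Tx_α = 0 in H. -/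
/-!
For `⇒`, a net with `x_α ↓ 0` in `F` is `F`-order convergent to `0`, dominated by itself, and a
positive net that order converges to `0` has infimum `0`. For `⇐`, if `x_α → 0` in `F`-order then
eventually the tails `{|x_β| : β ≥ α}` are bounded in `F`, so by `F`-Dedekind completeness of `E`
they have suprema `y_α ∈ E`; these satisfy `y_α ↓ 0` in `F`, hence `T y_α ↓ 0` in `H`, and
`|T x_β| ≤ T |x_β| ≤ T y_α` for `β ≥ α`.
-/

open Set

section

variable {F : Type*} [Lattice F] [AddCommGroup F] {ι : Type*} [Preorder ι] {x : ι → F}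

namespace FOrderConv

theorem of_eventually_abs_le {Λ : Type*} [Preorder Λ] [Nonempty Λ] [IsDirected Λ (· ≤ ·)]
    {z : Λ → F} (hz : Antitone z) (hz0 : IsGLB (range z) 0)
    (hxz : ∀ l, ∃ α₀, ∀ α, α₀ ≤ α → |x α| ≤ z l) : FOrderConv x 0 := by
  refine ⟨range z, range_nonempty z, directedOn_range.mpr hz.directed_ge, hz0, ?_⟩
  rintro _ ⟨l, rfl⟩
  simpa only [sub_zero] using hxz l

theorem le_zero_of_mem_lowerBounds (hx : FOrderConv x 0) {b : F}
    (hb : b ∈ lowerBounds (range x)) : b ≤ 0 := by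
  obtain ⟨D, -, -, hD0, hxD⟩ := hx
  refine hD0.2 fun d hd => ?_
  obtain ⟨α₀, hα₀⟩ := hxD d hd
  calc b ≤ x α₀ := hb ⟨α₀, rfl⟩
    _ ≤ |x α₀ - 0| := by rw [sub_zero]; exact le_abs_self _
    _ ≤ d := hα₀ α₀ le_rfl

theorem isGLB_range (hx : FOrderConv x 0) (hx_nonneg : ∀ α, 0 ≤ x α) : IsGLB (range x) 0 :=
  ⟨by rintro _ ⟨α, rfl⟩; exact hx_nonneg α, fun _ hb => hx.le_zero_of_mem_lowerBounds hb⟩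

variable [AddLeftMono F]

theorem of_antitone_of_isGLB [Nonempty ι] [IsDirected ι (· ≤ ·)] (hx : Antitone x)
    (hx0 : IsGLB (range x) 0) : FOrderConv x 0 :=
  of_eventually_abs_le hx hx0 fun α =>
    ⟨α, fun _ hβ => (abs_of_nonneg (hx0.1 ⟨_, rfl⟩)).trans_le (hx hβ)⟩

end FOrderConv

def tailAbs (x : ι → F) (α : ι) : Set F := (fun β => |x β|) '' Ici α

def bddTailIndices (x : ι → F) : Set ι := {α | BddAbove (tailAbs x α)}

theorem antitone_tailAbs : Antitone (tailAbs x) :=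
  fun _ _ h => image_mono (Ici_subset_Ici.mpr h)

theorem mem_upperBounds_tailAbs {α : ι} {d : F} :
    d ∈ upperBounds (tailAbs x α) ↔ ∀ β, α ≤ β → |x β| ≤ d := by
  simp only [tailAbs, mem_upperBounds, forall_mem_image, mem_Ici]

theorem isDirected_bddTailIndices [IsDirected ι (· ≤ ·)] :
    IsDirected (bddTailIndices x) (· ≤ ·) :=
  ⟨fun a b =>
    let ⟨c, hac, hbc⟩ := directed_of (· ≤ ·) a.1 b.1
    ⟨⟨c, a.2.mono (antitone_tailAbs hac)⟩, hac, hbc⟩⟩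

theorem antitone_of_isLUB_tailAbs {y : bddTailIndices x → F}
    (hy : ∀ a : bddTailIndices x, IsLUB (tailAbs x a) (y a)) : Antitone y :=
  fun a b hab => (hy b).mono (hy a) (antitone_tailAbs hab)

namespace FOrderConv

theorem nonempty_bddTailIndices (hx : FOrderConv x 0) :
    Nonempty (bddTailIndices x) := by
  obtain ⟨D, ⟨d, hd⟩, -, -, hxD⟩ := hx
  obtain ⟨α₀, hα₀⟩ := hxD d hd
  exact ⟨⟨α₀, d, mem_upperBounds_tailAbs.mpr fun β hβ => by simpa using hα₀ β hβ⟩⟩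

theorem isGLB_of_isLUB_tailAbs [AddLeftMono F] (hx : FOrderConv x 0)
    {y : bddTailIndices x → F} (hy : ∀ a : bddTailIndices x, IsLUB (tailAbs x a) (y a)) :
    IsGLB (range y) 0 := by
  refine ⟨?_, fun b hb => ?_⟩
  · rintro _ ⟨a, rfl⟩
    exact (abs_nonneg _).trans ((hy a).1 ⟨a.1, le_rfl, rfl⟩)
  obtain ⟨D, -, -, hD0, hxD⟩ := hx
  refine hD0.2 fun d hd => ?_
  obtain ⟨α₀, hα₀⟩ := hxD d hd
  have hd_bound : d ∈ upperBounds (tailAbs x α₀) :=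
    mem_upperBounds_tailAbs.mpr fun β hβ => by simpa using hα₀ β hβ
  exact (hb ⟨⟨α₀, d, hd_bound⟩, rfl⟩).trans ((hy _).2 hd_bound)

end FOrderConv

section Sublattice

variable {R : Type*} [Ring R] [Module R F] {E : Submodule R F}

theorem abs_mem_of_sup_mem (hEsup : ∀ a ∈ E, ∀ b ∈ E, a ⊔ b ∈ E) {v : F} (hv : v ∈ E) :
    |v| ∈ E :=
  hEsup _ hv _ (E.neg_mem hv)

theorem exists_isLUB_tailAbs
    (hEFDC : ∀ A : Set F, A ⊆ (E : Set F) → A.Nonempty → BddAbove A → ∃ s ∈ E, IsLUB A s)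
    (hEsup : ∀ a ∈ E, ∀ b ∈ E, a ⊔ b ∈ E) (x : ι → E)
    (a : bddTailIndices fun α => (x α : F)) :
    ∃ s : E, IsLUB (tailAbs (fun α => (x α : F)) a) s := by
  have htail_mem : tailAbs (fun α => (x α : F)) a ⊆ E := by
    rintro _ ⟨β, -, rfl⟩
    exact abs_mem_of_sup_mem hEsup (x β).2
  obtain ⟨s, hsE, hs⟩ := hEFDC _ htail_mem ⟨_, a.1, mem_Ici.mpr le_rfl, rfl⟩ a.2
  exact ⟨⟨s, hsE⟩, hs⟩

variable {H : Type*} [Lattice H] [AddCommGroup H] [AddLeftMono H] [Module R H] {T : E →ₗ[R] H}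

theorem map_le_map_of_nonneg [AddLeftMono F] (hT : ∀ v : E, (0 : F) ≤ v → 0 ≤ T v) {u v : E}
    (huv : (u : F) ≤ v) : T u ≤ T v := by
  rw [← sub_nonneg, ← map_sub]
  exact hT _ (by rw [Submodule.coe_sub, sub_nonneg]; exact huv)

theorem abs_map_le_map_abs [AddLeftMono F] (hT : ∀ v : E, (0 : F) ≤ v → 0 ≤ T v)
    (hEsup : ∀ a ∈ E, ∀ b ∈ E, a ⊔ b ∈ E) (v : E) :
    |T v| ≤ T ⟨|(v : F)|, abs_mem_of_sup_mem hEsup v.2⟩ := by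
  refine abs_le'.mpr ⟨map_le_map_of_nonneg hT (le_abs_self _), ?_⟩
  rw [← map_neg]
  exact map_le_map_of_nonneg hT (by simpa using neg_le_abs (v : F))

end Sublattice

end

theorem fhOrderContinuous_iff_downward_general
    {F H : Type*} [Lattice F] [AddCommGroup F] [CovariantClass F F (· + ·) (· ≤ ·)]
    [Module ℝ F] [Lattice H] [AddCommGroup H] [CovariantClass H H (· + ·) (· ≤ ·)]
    [Module ℝ H]
    (E : Submodule ℝ F)
    (hEsup : ∀ a ∈ E, ∀ b ∈ E, a ⊔ b ∈ E)
    (hEFDC : ∀ A : Set F, A ⊆ (E : Set F) → A.Nonempty → BddAbove A → ∃ s ∈ E, IsLUB A s)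
    (T : E →ₗ[ℝ] H)
    (hTpos : ∀ v : E, (0 : F) ≤ (v : F) → 0 ≤ T v) :
    (∀ (ι : Type) [Preorder ι] [Nonempty ι] [IsDirected ι (· ≤ ·)] (x : ι → E),
        FOrderConv (fun α => (x α : F)) 0 → FOrderConv (fun α => T (x α)) 0) ↔
    (∀ (ι : Type) [Preorder ι] [Nonempty ι] [IsDirected ι (· ≤ ·)] (x : ι → E),
        Antitone (fun α => (x α : F)) → IsGLB (Set.range fun α => (x α : F)) 0 →
        Antitone (fun α => T (x α)) ∧ IsGLB (Set.range fun α => T (x α)) 0) := by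
  constructor
  · intro hcont ι _ _ _ x hx hx0
    refine ⟨fun _ _ hab => map_le_map_of_nonneg hTpos (hx hab), ?_⟩
    exact (hcont ι x (.of_antitone_of_isGLB hx hx0)).isGLB_range
      fun α => hTpos _ (hx0.1 ⟨α, rfl⟩)
  · intro hdown ι _ _ _ x hx
    have := hx.nonempty_bddTailIndices
    have := isDirected_bddTailIndices (x := fun α => (x α : F))
    choose y hy using exists_isLUB_tailAbs hEFDC hEsup x
    obtain ⟨hTy, hTy0⟩ :=
      hdown _ y (antitone_of_isLUB_tailAbs hy) (hx.isGLB_of_isLUB_tailAbs hy)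
    refine .of_eventually_abs_le hTy hTy0 fun a => ⟨a.1, fun β hβ => ?_⟩
    calc |T (x β)| ≤ T ⟨_, _⟩ := abs_map_le_map_abs hTpos hEsup (x β)
      _ ≤ T (y a) := map_le_map_of_nonneg hTpos ((hy a).1 ⟨β, hβ, rfl⟩)

/-- Let `E ⊆ F` be an `F`-Dedekind complete sublattice (a linear sublattice, given as a
submodule closed under `⊔` and `⊓`), and `G ⊆ H` an `H`-Dedekind complete ideal.
A positive linear operator `T : E → G` is `FH`-order continuous iff for every net
`{x_α}` in `E` with `x_α ↓` and `inf x_α = 0` in `F`, one has `Tx_α ↓` and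
`inf Tx_α = 0` in `H`. -/
theorem fhOrderContinuous_iff_downward
    {F H : Type*} [Lattice F] [AddCommGroup F] [CovariantClass F F (· + ·) (· ≤ ·)]
    [Module ℝ F] [Lattice H] [AddCommGroup H] [CovariantClass H H (· + ·) (· ≤ ·)]
    [Module ℝ H]
    (E : Submodule ℝ F)
    (hEsup : ∀ a ∈ E, ∀ b ∈ E, a ⊔ b ∈ E) (hEinf : ∀ a ∈ E, ∀ b ∈ E, a ⊓ b ∈ E)
    (G : Set H)
    (hGsolid : ∀ u v : H, |u| ≤ |v| → v ∈ G → u ∈ G)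
    (hGadd : ∀ a ∈ G, ∀ b ∈ G, a + b ∈ G) (hGsmul : ∀ (c : ℝ), ∀ a ∈ G, c • a ∈ G)
    (hEFDC : ∀ A : Set F, A ⊆ (E : Set F) → A.Nonempty → BddAbove A → ∃ s ∈ E, IsLUB A s)
    (hGHDC : ∀ A : Set H, A ⊆ G → A.Nonempty → BddAbove A → ∃ s ∈ G, IsLUB A s)
    (T : E →ₗ[ℝ] H) (hTG : ∀ v : E, T v ∈ G)
    (hTpos : ∀ v : E, (0 : F) ≤ (v : F) → 0 ≤ T v) :
    (∀ (ι : Type) [Preorder ι] [Nonempty ι] [IsDirected ι (· ≤ ·)] (x : ι → E),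
        FOrderConv (fun α => (x α : F)) 0 → FOrderConv (fun α => T (x α)) 0) ↔
    (∀ (ι : Type) [Preorder ι] [Nonempty ι] [IsDirected ι (· ≤ ·)] (x : ι → E),
        Antitone (fun α => (x α : F)) → IsGLB (Set.range fun α => (x α : F)) 0 →
        Antitone (fun α => T (x α)) ∧ IsGLB (Set.range fun α => T (x α)) 0) :=
  fhOrderContinuous_iff_downward_general E hEsup hEFDC T hTpos
end
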